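/- Let Q₃(M) = 2μ|sym M|² + κ (tr M)² for 3×3 matrices M, with μ > 0 and κ > 0. For every 2×2 matrix G, the minimum over b ∈ ℝ² and a ∈ ℝ of Q₃ applied to the 3×3 matrix with upper-left block G, last column (b, a), and zero in the remaining entries of the last row, equals Q₂(G) := 2μ(|sym G|² + γ (tr G)²), where γ = κ/(2μ + κ). The minimum is attained at b = 0 and a = -γ tr G. -/

import Mathlib

open Matrix

/-- Squared Frobenius norm. -/
def frobSq {m : Type*} [Fintype m] (M : Matrix m m ℝ) : ℝ := ∑ i, ∑ j, (M i j) ^ 2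

/-- Symmetric part of a matrix. -/
noncomputable def symPart {m : Type*} [Fintype m] (M : Matrix m m ℝ) : Matrix m m ℝ :=
  (1 / 2 : ℝ) • (M + Mᵀ)

/-- `Q₃(M) = 2μ|sym M|² + κ (tr M)²`. -/
noncomputable def Q3 (μ κ : ℝ) (M : Matrix (Fin 2 ⊕ Fin 1) (Fin 2 ⊕ Fin 1) ℝ) : ℝ :=
  2 * μ * frobSq (symPart M) + κ * (Matrix.trace M) ^ 2

/-- `Q₂(G) = 2μ(|sym G|² + γ (tr G)²)`. -/
noncomputable def Q2 (μ γ : ℝ) (G : Matrix (Fin 2) (Fin 2) ℝ) : ℝ :=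
  2 * μ * (frobSq (symPart G) + γ * (Matrix.trace G) ^ 2)

/-!
Writing `t = tr G` and `γ = κ / (2μ + κ)`, the matrix with blocks `G`, `b`, `0`, `a` has
`|sym M|² = |sym G|² + |b|² / 2 + a²` and `tr M = t + a`, so `Q₃(M) - Q₂(G) = μ |b|² + f(a)` with
`f(a) = 2μ a² + κ (t + a)² - 2μγ t²`. Completing the square gives `f(a) = (2μ + κ)(a + γ t)²`,
which is nonnegative and vanishes at `a = -γ t`.
-/

section Blocks

variable {m n : Type*} [Fintype m] [Fintype n]

theorem Matrix.trace_fromBlocks {α : Type*} [AddCommMonoid α] (A : Matrix m m α)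
    (B : Matrix m n α) (C : Matrix n m α) (D : Matrix n n α) : trace (fromBlocks A B C D) = trace A + trace D := by
  simp [trace, Fintype.sum_sum_type]

theorem frobSq_fromBlocks (A : Matrix m m ℝ) (B : Matrix m n ℝ) (C : Matrix n m ℝ)
    (D : Matrix n n ℝ) :
    frobSq (fromBlocks A B C D) =
      frobSq A + frobSq D + ∑ i, ∑ j, B i j ^ 2 + ∑ j, ∑ i, C j i ^ 2 := by
  simp only [frobSq, Fintype.sum_sum_type, fromBlocks_apply₁₁, fromBlocks_apply₁₂,
    fromBlocks_apply₂₁, fromBlocks_apply₂₂, Finset.sum_add_distrib]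
  ring

theorem symPart_fromBlocks (A : Matrix m m ℝ) (B : Matrix m n ℝ) (C : Matrix n m ℝ)
    (D : Matrix n n ℝ) :
    symPart (fromBlocks A B C D) =
      fromBlocks (symPart A) ((1 / 2 : ℝ) • (B + Cᵀ)) ((1 / 2 : ℝ) • (C + Bᵀ)) (symPart D) := by
  simp only [symPart, fromBlocks_transpose, fromBlocks_add, fromBlocks_smul]

theorem frobSq_symPart_fromBlocks_zero (A : Matrix m m ℝ) (B : Matrix m n ℝ)
    (D : Matrix n n ℝ) :
    frobSq (symPart (fromBlocks A B 0 D)) =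
      frobSq (symPart A) + frobSq (symPart D) + (∑ i, ∑ j, B i j ^ 2) / 2 := by
  rw [symPart_fromBlocks, frobSq_fromBlocks, Finset.sum_comm (γ := n)]
  simp only [Matrix.smul_apply, Matrix.add_apply, transpose_apply, Matrix.zero_apply,
    smul_eq_mul, add_zero, zero_add, mul_pow, ← Finset.mul_sum]
  ring

end Blocks

theorem frobSq_symPart_of_const {n : Type*} [Fintype n] [Unique n] (a : ℝ) :
    frobSq (symPart (of fun _ _ => a : Matrix n n ℝ)) = a ^ 2 := by
  simp only [frobSq, Finset.univ_unique, symPart, Matrix.smul_apply, Matrix.add_apply, of_apply,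
    transpose_apply, smul_eq_mul, Finset.sum_const, Finset.card_singleton, one_smul]
  ring

theorem two_mul_sq_add_mul_sq_eq {μ κ : ℝ} (h : 2 * μ + κ ≠ 0) (t a : ℝ) :
    2 * μ * a ^ 2 + κ * (t + a) ^ 2 =
      2 * μ * (κ / (2 * μ + κ)) * t ^ 2 + (2 * μ + κ) * (a + κ / (2 * μ + κ) * t) ^ 2 := by
  field_simp
  ring

theorem Q3_fromBlocks_eq_Q2_add {μ κ : ℝ} (h : 2 * μ + κ ≠ 0) (G : Matrix (Fin 2) (Fin 2) ℝ)
    (B : Matrix (Fin 2) (Fin 1) ℝ) (a : ℝ) :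
    Q3 μ κ (fromBlocks G B 0 (of fun _ _ => a)) =
      Q2 μ (κ / (2 * μ + κ)) G + μ * ∑ i, ∑ j, B i j ^ 2 +
        (2 * μ + κ) * (a + κ / (2 * μ + κ) * trace G) ^ 2 := by
  have htr : trace (of fun _ _ => a : Matrix (Fin 1) (Fin 1) ℝ) = a := by simp [trace]
  have hsq := two_mul_sq_add_mul_sq_eq h (trace G) a
  rw [Q3, Q2, frobSq_symPart_fromBlocks_zero, frobSq_symPart_of_const, trace_fromBlocks, htr]
  linear_combination hsq

theorem Q2_relaxation (μ κ : ℝ) (hμ : 0 < μ) (hκ : 0 < κ)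
    (G : Matrix (Fin 2) (Fin 2) ℝ) :
    (∀ (b : Fin 2 → ℝ) (a : ℝ),
      Q2 μ (κ / (2 * μ + κ)) G ≤
        Q3 μ κ (fromBlocks G (Matrix.of fun i _ => b i) 0 (Matrix.of fun _ _ => a))) ∧
    Q3 μ κ (fromBlocks G 0 0
        (Matrix.of fun _ _ => -(κ / (2 * μ + κ)) * Matrix.trace G)) =
      Q2 μ (κ / (2 * μ + κ)) G := by
  have hpos : 0 < 2 * μ + κ := by positivity
  constructor
  · intro b a
    rw [Q3_fromBlocks_eq_Q2_add hpos.ne']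
    have hb : 0 ≤ μ * ∑ i, ∑ j, (of fun i (_ : Fin 1) => b i) i j ^ 2 := by positivity
    have ha : 0 ≤ (2 * μ + κ) * (a + κ / (2 * μ + κ) * trace G) ^ 2 := by positivity
    linarith
  · rw [Q3_fromBlocks_eq_Q2_add hpos.ne']
    simp
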